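/- (Subdifferential of a maximum via Lagrange multipliers) Let X be a semidivisible additive commutative group, k ≥ 1, and f₁,…,f_k : X → ℝ convex. Let f(x) = max_{1 ≤ i ≤ k} fᵢ(x), let x₀ ∈ X, and let I(x₀) = { i : fᵢ(x₀) = f(x₀) }. Then an additive map φ : X → ℝ belongs to ∂f(x₀) if and only if there exist nonnegative reals λ₁,…,λ_k with λᵢ = 0 for i ∉ I(x₀) and λ₁+⋯+λ_k = 1, and additive maps aᵢ ∈ ∂fᵢ(x₀) for i ∈ I(x₀), such that φ(x) = Σ_{i ∈ I(x₀)} λᵢ · aᵢ(x) for all x ∈ X; that is, ∂f(x₀) is the convex hull (with real coefficients, in the real vector space of additive maps X → ℝ) of ⋃_{i ∈ I(x₀)} ∂fᵢ(x₀). -/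

import Mathlib

/-- A real-valued function on an additive commutative monoid is convex. -/
def RConvexFn {X : Type*} [AddCommMonoid X] (f : X → ℝ) : Prop :=
  ∀ (n : ℕ), 0 < n → ∀ m : Fin n → ℕ, (∀ i, 0 < m i) →
    ∀ (xs : Fin n → X) (x : X), (∑ i, m i) • x = ∑ i, m i • xs i →
      ((∑ i, m i : ℕ) : ℝ) * f x ≤ ∑ i, (m i : ℝ) * f (xs i)

/-- The subdifferential of `f` at `x₀`: additive maps `a : X → ℝ` with
`f(x₀) + a(h) ≤ f(x₀ + h)` for all `h`. -/
def subdiff {X : Type*} [AddCommGroup X] (f : X → ℝ) (x₀ : X) : Set (X → ℝ) :=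
  {a | (∀ x y, a (x + y) = a x + a y) ∧ ∀ h, f x₀ + a h ≤ f (x₀ + h)}

/-!
A convex combination of subgradients of active `fᵢ` is plainly a subgradient of `f`. Conversely,
for `φ ∈ ∂f(x₀)` the functions `Fᵢ h = fᵢ (x₀ + h) - f x₀ - φ h` are convex, nonpositive at `0`
(zero exactly for active `i`), and `maxᵢ Fᵢ ≥ 0`. Choosing `p`-th roots, the directional
derivatives `Dᵢ h = infₙ pⁿ Fᵢ (p⁻ⁿ h)` of the active `Fᵢ` are subadditive, and for every `h` some
`Dᵢ h ≥ 0`, because an inactive `Fᵢ` is negative near `0`. The vectors dominating some `(Dᵢ h)ᵢ`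
form an additive monoid missing the open negative orthant; rounding convex weights up to integers
shows that its convex hull misses it too, so Hahn–Banach in `ℝ^I` gives multipliers `λ` with
`∑ λᵢ Dᵢ ≥ 0`. The sandwich theorem for abelian groups, proved with a Dixmier invariant mean,
splits this into additive `bᵢ ≤ Dᵢ` with `∑ λᵢ bᵢ = 0`, and `aᵢ = φ + bᵢ`.
-/

open Finset Filter

theorem Finset.sum_equivFin_symm_filter_of_ne {ι M : Type*} [AddCommMonoid M] (s : Finset ι)
    (p : ι → Prop) [DecidablePred p] (g : ι → M) (hg : ∀ i ∈ s, g i ≠ 0 → p i) :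
    ∑ i ∈ s, g i = ∑ j, g ((s.filter p).equivFin.symm j) := by
  rw [Equiv.sum_comp (s.filter p).equivFin.symm (fun i => g i), sum_coe_sort,
    sum_filter_of_ne hg]

namespace RConvexFn

variable {X : Type*} [AddCommGroup X] {F : X → ℝ}

theorem mul_le_sum (hF : RConvexFn F) {ι : Type*} (s : Finset ι) (m : ι → ℕ) (xs : ι → X)
    {x : X} (hm : 0 < ∑ i ∈ s, m i) (hx : (∑ i ∈ s, m i) • x = ∑ i ∈ s, m i • xs i) :
    ((∑ i ∈ s, m i : ℕ) : ℝ) * F x ≤ ∑ i ∈ s, (m i : ℝ) * F (xs i) := by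
  classical
  set t := s.filter fun i => m i ≠ 0
  have hm' : ∑ i ∈ s, m i = ∑ j, m (t.equivFin.symm j) :=
    sum_equivFin_symm_filter_of_ne s _ m fun _ _ => id
  have hxs : ∑ i ∈ s, m i • xs i = ∑ j, m (t.equivFin.symm j) • xs (t.equivFin.symm j) :=
    sum_equivFin_symm_filter_of_ne s _ _ fun i _ hi h => hi (by simp [h])
  have hFxs : ∑ i ∈ s, (m i : ℝ) * F (xs i) =
      ∑ j, (m (t.equivFin.symm j) : ℝ) * F (xs (t.equivFin.symm j)) :=
    sum_equivFin_symm_filter_of_ne s _ _ fun i _ hi h => hi (by simp [h])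
  obtain ⟨i₀, hi₀, hmi₀⟩ := exists_ne_zero_of_sum_ne_zero hm.ne'
  rw [hm', hFxs]
  exact hF _ (card_pos.2 ⟨i₀, mem_filter.2 ⟨hi₀, hmi₀⟩⟩) _
    (fun j => Nat.pos_of_ne_zero (mem_filter.1 (t.equivFin.symm j).2).2) _ x
    (by rw [← hm', hx, hxs])

theorem apply_eq_of_nsmul_eq (hF : RConvexFn F) {n : ℕ} (hn : 0 < n) {x y : X}
    (h : n • x = n • y) : F x = F y := by
  have key : ∀ {a b : X}, n • a = n • b → F a ≤ F b := fun {a b} hab => by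
    have := hF.mul_le_sum {()} (fun _ => n) (fun _ => b) (by rwa [sum_singleton])
      (by simpa using hab)
    simp only [sum_singleton] at this
    exact le_of_mul_le_mul_left this (by exact_mod_cast hn)
  exact le_antisymm (key h) (key h.symm)

theorem mul_apply_le_of_nsmul_eq (hF : RConvexFn F) {n : ℕ} (hn : 0 < n) {y z : X}
    (h : n • z = y) : (n : ℝ) * F z ≤ F y + (n - 1) * F 0 := by
  have := hF.mul_le_sum univ ![1, n - 1] ![y, 0] (x := z) (by simp)
    (by simpa [Nat.add_sub_cancel' hn] using h)
  simpa [Nat.add_sub_cancel' hn, Nat.cast_sub hn] using this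

theorem mul_apply_le_of_nsmul_eq_add (hF : RConvexFn F) {n : ℕ} (hn : 2 ≤ n) {w y z : X}
    (h : n • w = y + z) : (n : ℝ) * F w ≤ F y + F z + (n - 2) * F 0 := by
  have hn' : 1 + 1 + (n - 2) = n := by omega
  have := hF.mul_le_sum univ ![1, 1, n - 2] ![y, z, 0] (x := w) (by simp [Fin.sum_univ_three])
    (by simpa [Fin.sum_univ_three, hn'] using h)
  simpa [Fin.sum_univ_three, hn', Nat.cast_sub hn, add_assoc] using this

theorem mul_apply_zero_le (hF : RConvexFn F) (n : ℕ) {y z : X} (h : n • y + z = 0) :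
    ((n : ℝ) + 1) * F 0 ≤ n * F y + F z := by
  have := hF.mul_le_sum univ ![n, 1] ![y, z] (x := 0) (by simp) (by simpa using h.symm)
  simpa [Fin.sum_univ_two] using this

theorem comp_add_left (hF : RConvexFn F) (x₀ : X) : RConvexFn fun h => F (x₀ + h) := by
  intro n hn m hm xs x hx
  refine hF n hn m hm (fun i => x₀ + xs i) (x₀ + x) ?_
  simp only [smul_add, hx, sum_add_distrib, sum_smul]

theorem sub_addMonoidHom (hF : RConvexFn F) (φ : X →+ ℝ) (c : ℝ) :
    RConvexFn fun h => F h - c - φ h := by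
  intro n hn m hm xs x hx
  have hφ := congrArg φ hx
  simp only [map_nsmul, map_sum, nsmul_eq_mul, Nat.cast_sum] at hφ
  have := hF n hn m hm xs x hx
  simp only [mul_sub, sum_sub_distrib, ← sum_mul, Nat.cast_sum] at this ⊢
  linarith

end RConvexFn

section DirDeriv

variable {X : Type*} [AddCommGroup X] {p : ℕ} {s : X → X}

theorem pow_nsmul_iterate_eq (hs : ∀ x, p • s x = x) (n : ℕ) (x : X) : p ^ n • s^[n] x = x := by
  induction n generalizing x with
  | zero => simp
  | succ n ih => rw [pow_succ', mul_smul, Function.iterate_succ_apply, ih, hs]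

variable (p s) in
def scaledSeq (F : X → ℝ) (h : X) (n : ℕ) : ℝ := (p : ℝ) ^ n * F (s^[n] h)

variable (p s) in
/-- The one-sided derivative of `F` at `0` in direction `h`, computed along `t = p⁻ⁿ`, where `s`
chooses `p`-th roots. -/
noncomputable def dirDeriv (F : X → ℝ) (h : X) : ℝ := ⨅ n, scaledSeq p s F h n

variable {F : X → ℝ}

theorem scaledSeq_le (hF : RConvexFn F) (hp : 0 < p) (hs : ∀ x, p • s x = x) (h : X) (n : ℕ) :
    scaledSeq p s F h n ≤ F h + ((p : ℝ) ^ n - 1) * F 0 := by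
  simpa [scaledSeq] using hF.mul_apply_le_of_nsmul_eq (pow_pos hp n) (pow_nsmul_iterate_eq hs n h)

theorem scaledSeq_antitone (hF : RConvexFn F) (hF0 : F 0 = 0) (hp : 0 < p)
    (hs : ∀ x, p • s x = x) (h : X) : Antitone (scaledSeq p s F h) := by
  refine antitone_nat_of_succ_le fun n => ?_
  have := hF.mul_apply_le_of_nsmul_eq hp (hs (s^[n] h))
  rw [hF0, mul_zero, add_zero, ← Function.iterate_succ_apply' s] at this
  calc scaledSeq p s F h (n + 1) = (p : ℝ) ^ n * (p * F (s^[n + 1] h)) := by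
        rw [scaledSeq, pow_succ, mul_assoc]
    _ ≤ scaledSeq p s F h n := mul_le_mul_of_nonneg_left this (by positivity)

theorem neg_apply_neg_le_scaledSeq (hF : RConvexFn F) (hF0 : F 0 = 0) (hs : ∀ x, p • s x = x)
    (h : X) (n : ℕ) : -F (-h) ≤ scaledSeq p s F h n := by
  have := hF.mul_apply_zero_le (p ^ n) (y := s^[n] h) (z := -h)
    (by rw [pow_nsmul_iterate_eq hs, add_neg_cancel])
  rw [hF0, mul_zero] at this
  push_cast at this
  rw [scaledSeq]
  linarith

theorem bddBelow_range_scaledSeq (hF : RConvexFn F) (hF0 : F 0 = 0) (hs : ∀ x, p • s x = x)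
    (h : X) : BddBelow (Set.range (scaledSeq p s F h)) :=
  ⟨-F (-h), Set.forall_mem_range.2 (neg_apply_neg_le_scaledSeq hF hF0 hs h)⟩

theorem dirDeriv_le_scaledSeq (hF : RConvexFn F) (hF0 : F 0 = 0) (hs : ∀ x, p • s x = x)
    (h : X) (n : ℕ) : dirDeriv p s F h ≤ scaledSeq p s F h n :=
  ciInf_le (bddBelow_range_scaledSeq hF hF0 hs h) n

theorem dirDeriv_le_self (hF : RConvexFn F) (hF0 : F 0 = 0) (hs : ∀ x, p • s x = x) (h : X) :
    dirDeriv p s F h ≤ F h := by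
  simpa [scaledSeq] using dirDeriv_le_scaledSeq hF hF0 hs h 0

theorem dirDeriv_zero (hF : RConvexFn F) (hF0 : F 0 = 0) (hs : ∀ x, p • s x = x) :
    dirDeriv p s F 0 = 0 :=
  le_antisymm (by simpa [hF0] using dirDeriv_le_self hF hF0 hs 0)
    (by simpa [hF0, dirDeriv] using le_ciInf (neg_apply_neg_le_scaledSeq hF hF0 hs 0))

theorem dirDeriv_add_le (hF : RConvexFn F) (hF0 : F 0 = 0) (hp : 2 ≤ p) (hs : ∀ x, p • s x = x)
    (a b : X) : dirDeriv p s F (a + b) ≤ dirDeriv p s F a + dirDeriv p s F b := by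
  have hp0 : 0 < p := by omega
  refine le_ciInf_add_ciInf fun m n => ?_
  -- `s^[k+1] (a + b)` and `s (s^[k] a + s^[k] b)` differ by `p ^ (k+1)`-torsion
  set k := max m n
  have hroot : p ^ (k + 1) • s^[k + 1] (a + b) = p ^ (k + 1) • s (s^[k] a + s^[k] b) := by
    rw [pow_nsmul_iterate_eq hs, pow_succ, mul_smul, hs, smul_add, pow_nsmul_iterate_eq hs,
      pow_nsmul_iterate_eq hs]
  have hmid := hF.mul_apply_le_of_nsmul_eq_add hp (hs (s^[k] a + s^[k] b))
  rw [hF0, mul_zero, add_zero, ← hF.apply_eq_of_nsmul_eq (pow_pos hp0 _) hroot] at hmid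
  calc dirDeriv p s F (a + b) ≤ scaledSeq p s F (a + b) (k + 1) :=
        dirDeriv_le_scaledSeq hF hF0 hs _ _
    _ = (p : ℝ) ^ k * (p * F (s^[k + 1] (a + b))) := by rw [scaledSeq, pow_succ, mul_assoc]
    _ ≤ scaledSeq p s F a k + scaledSeq p s F b k := by
        rw [scaledSeq, scaledSeq, ← mul_add]; gcongr
    _ ≤ scaledSeq p s F a m + scaledSeq p s F b n := by
        gcongr
        · exact scaledSeq_antitone hF hF0 hp0 hs a (le_max_left m n)
        · exact scaledSeq_antitone hF hF0 hp0 hs b (le_max_right m n)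

theorem exists_dirDeriv_nonneg {ι : Type*} [Finite ι] {F : ι → X → ℝ}
    (hF : ∀ i, RConvexFn (F i)) (hF0 : ∀ i, F i 0 ≤ 0) (hp : 1 < p) (hs : ∀ x, p • s x = x)
    (hmax : ∀ h, ∃ i, 0 ≤ F i h) (h : X) : ∃ i, F i 0 = 0 ∧ 0 ≤ dirDeriv p s (F i) h := by
  by_contra! hneg
  have hp0 : 0 < p := by omega
  have hev : ∀ i, ∀ᶠ n in atTop, scaledSeq p s (F i) h n < 0 := by
    intro i
    rcases (hF0 i).lt_or_eq with hlt | heq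
    · -- the bound `F h + (p ^ n - 1) F 0` of `scaledSeq_le` tends to `-∞`
      filter_upwards [(tendsto_pow_atTop_atTop_of_one_lt (by exact_mod_cast hp : (1 : ℝ) < p))
        |>.eventually_gt_atTop ((F i h - F i 0) / -F i 0)] with n hn
      rw [div_lt_iff₀ (neg_pos.2 hlt)] at hn
      linarith [scaledSeq_le (hF i) hp0 hs h n]
    · obtain ⟨n₀, hn₀⟩ := exists_lt_of_ciInf_lt (hneg i heq)
      filter_upwards [eventually_ge_atTop n₀] with n hn
      exact (scaledSeq_antitone (hF i) heq hp0 hs h hn).trans_lt hn₀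
  obtain ⟨n, hn⟩ := (eventually_all.2 hev).exists
  obtain ⟨i, hi⟩ := hmax (s^[n] h)
  exact (hn i).not_ge (mul_nonneg (by positivity) hi)

end DirDeriv

section Separation

variable {ι : Type*} [Fintype ι]

theorem AddSubmonoid.exists_nonneg_of_mem_convexHull (S : AddSubmonoid (ι → ℝ))
    (hS : ∀ v ∈ S, ∃ i, 0 ≤ v i) {v : ι → ℝ} (hv : v ∈ convexHull ℝ (S : Set (ι → ℝ))) :
    ∃ i, 0 ≤ v i := by
  obtain ⟨κ, _, w, z, hw0, -, hz, rfl⟩ := mem_convexHull_iff_exists_fintype.1 hv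
  by_contra! hneg
  simp only [Finset.sum_apply, Pi.smul_apply, smul_eq_mul] at hneg
  -- rounding the weights `n * w` up to integers moves `n • v` by a bounded amount
  have hround : ∀ i, ∀ᶠ n : ℕ in atTop, ∑ a, (⌈n * w a⌉₊ : ℝ) * z a i < 0 := by
    intro i
    filter_upwards [tendsto_natCast_atTop_atTop.eventually_gt_atTop
      ((∑ a, |z a i|) / -∑ a, w a * z a i)] with n hn
    rw [div_lt_iff₀ (neg_pos.2 (hneg i))] at hn
    have hterm : ∀ a, (⌈n * w a⌉₊ : ℝ) * z a i ≤ n * (w a * z a i) + |z a i| := fun a => by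
      have h₁ := Nat.le_ceil ((n : ℝ) * w a)
      have h₂ := Nat.ceil_lt_add_one (mul_nonneg (Nat.cast_nonneg n) (hw0 a))
      nlinarith [abs_nonneg (z a i), le_abs_self (z a i), neg_abs_le (z a i)]
    calc ∑ a, (⌈n * w a⌉₊ : ℝ) * z a i ≤ ∑ a, (n * (w a * z a i) + |z a i|) :=
          sum_le_sum fun a _ => hterm a
      _ = n * ∑ a, w a * z a i + ∑ a, |z a i| := by rw [sum_add_distrib, mul_sum]
      _ < 0 := by linarith
  obtain ⟨n, hn⟩ := (eventually_all.2 hround).exists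
  obtain ⟨i, hi⟩ := hS (∑ a, ⌈n * w a⌉₊ • z a) (S.sum_mem fun a _ => S.nsmul_mem (hz a) _)
  simp only [Finset.sum_apply, nsmul_eq_mul] at hi
  exact (hn i).not_ge hi

theorem LinearMap.exists_mem_stdSimplex_of_bddAbove_on_nonpos (f : (ι → ℝ) →ₗ[ℝ] ℝ)
    (hf0 : f ≠ 0) {u : ℝ} (hf : ∀ w : ι → ℝ, (∀ i, w i ≤ 0) → f w ≤ u) :
    ∃ lam ∈ stdSimplex ℝ ι, ∃ c > 0, ∀ v, f v = c * ∑ i, lam i * v i := by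
  classical
  set e : ι → ι → ℝ := fun i j => if i = j then 1 else 0
  have hrepr : ∀ v, f v = ∑ i, f (e i) * v i := fun v => by
    simp_rw [mul_comm _ (v _)]
    exact f.pi_apply_eq_sum_univ v
  have hfe : ∀ i, 0 ≤ f (e i) := fun i => by
    by_contra! hi
    set t := (|u| + 1) / -f (e i)
    have ht : 0 < t := div_pos (by positivity) (by linarith)
    have h₁ := hf ((-t) • e i) fun j => by
      simp only [e, Pi.smul_apply, smul_eq_mul]
      split_ifs <;> linarith
    have h₂ : (-t) * f (e i) = |u| + 1 := by
      simp only [t]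
      field_simp [hi.ne]
    rw [map_smul, smul_eq_mul, h₂] at h₁
    linarith [le_abs_self u]
  have hsum : 0 < ∑ i, f (e i) := by
    refine (sum_nonneg fun i _ => hfe i).lt_of_ne' fun h0 => hf0 (LinearMap.ext fun v => ?_)
    rw [hrepr, LinearMap.zero_apply]
    exact sum_eq_zero fun i _ => by
      rw [(sum_eq_zero_iff_of_nonneg fun j _ => hfe j).1 h0 i (mem_univ i), zero_mul]
  refine ⟨fun i => f (e i) / ∑ j, f (e j), ⟨fun i => div_nonneg (hfe i) hsum.le, ?_⟩,
    _, hsum, fun v => ?_⟩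
  · rw [← sum_div, div_self hsum.ne']
  · simp_rw [div_mul_eq_mul_div, ← sum_div, ← hrepr]
    field_simp

theorem exists_mem_stdSimplex_sum_mul_nonneg {C : Set (ι → ℝ)} (hC : Convex ℝ C)
    (hne : C.Nonempty) (hCO : ∀ v ∈ C, ∃ i, 0 ≤ v i) :
    ∃ lam ∈ stdSimplex ℝ ι, ∀ v ∈ C, 0 ≤ ∑ i, lam i * v i := by
  obtain ⟨f, u, hfO, hfC⟩ := geometric_hahn_banach_open (convex_pi fun _ _ => convex_Iio 0)
    (isOpen_set_pi Set.finite_univ fun _ _ => isOpen_Iio) hC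
    (Set.disjoint_right.2 fun v hv hvO => by
      obtain ⟨i, hi⟩ := hCO v hv
      exact (hvO i trivial).not_ge hi)
  have hfO' : ∀ w : ι → ℝ, (∀ i, w i ≤ 0) → f w ≤ u := fun w hw => by
    have hw : w ∈ closure (Set.univ.pi fun _ => Set.Iio 0) := by
      rw [closure_pi_set]
      simp only [closure_Iio]
      exact fun i _ => hw i
    exact closure_minimal (fun x hx => (hfO x hx).le) (isClosed_le f.continuous continuous_const) hw
  obtain ⟨c, hc⟩ := hne
  have hu : 0 ≤ u := by simpa using hfO' 0 fun _ => le_rfl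
  have hf0 : f.toLinearMap ≠ 0 := fun h0 => by
    have := hfO (fun _ => -1) fun _ _ => by simp
    have := hfC c hc
    simp only [← ContinuousLinearMap.coe_coe f, h0, LinearMap.zero_apply] at *
    linarith
  obtain ⟨lam, hlam, r, hr, hf⟩ :=
    f.toLinearMap.exists_mem_stdSimplex_of_bddAbove_on_nonpos hf0 hfO'
  refine ⟨lam, hlam, fun v hv => nonneg_of_mul_nonneg_right ?_ hr⟩
  rw [← hf]
  exact hu.trans (hfC v hv)

end Separation

section InvariantMean

variable {X : Type*} [AddCommGroup X]

variable (X) in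
def boundedFunctions : Submodule ℝ (X → ℝ) where
  carrier := {g | ∃ C, ∀ x, |g x| ≤ C}
  add_mem' := fun ⟨C, hC⟩ ⟨D, hD⟩ =>
    ⟨C + D, fun x => (abs_add_le _ _).trans (add_le_add (hC x) (hD x))⟩
  zero_mem' := ⟨0, fun _ => by simp⟩
  smul_mem' c _ := fun ⟨C, hC⟩ => ⟨|c| * C, fun x => by
    rw [Pi.smul_apply, smul_eq_mul, abs_mul]
    exact mul_le_mul_of_nonneg_left (hC x) (abs_nonneg c)⟩

theorem comp_add_right_mem_boundedFunctions {g : X → ℝ} (hg : g ∈ boundedFunctions X) (t : X) :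
    (fun x => g (x + t)) ∈ boundedFunctions X :=
  let ⟨C, hC⟩ := hg
  ⟨C, fun x => hC (x + t)⟩

noncomputable def avgSup (g : X → ℝ) {n : ℕ} (y : Fin (n + 1) → X) : ℝ :=
  ⨆ x, (∑ j, g (x + y j)) / (n + 1)

/-- Dixmier's sublinear functional; every linear functional below it is a translation-invariant
mean. -/
noncomputable def dixmierMean (g : X → ℝ) : ℝ :=
  ⨅ q : Σ n : ℕ, Fin (n + 1) → X, avgSup g q.2

variable {g h : X → ℝ} {C : ℝ}

theorem sum_comp_add_le_mul {n : ℕ} (y : Fin (n + 1) → X) {c : ℝ} (hc : ∀ x, g x ≤ c) (x : X) :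
    ∑ j, g (x + y j) ≤ (n + 1) * c := by
  simpa using sum_le_sum fun j (_ : j ∈ univ) => hc (x + y j)

theorem avgSup_le {n : ℕ} (y : Fin (n + 1) → X) {c : ℝ} (hc : ∀ x, g x ≤ c) : avgSup g y ≤ c :=
  ciSup_le fun x => (div_le_iff₀' (by positivity)).2 (sum_comp_add_le_mul y hc x)

theorem sum_le_mul_avgSup (hg : ∀ x, |g x| ≤ C) {n : ℕ} (y : Fin (n + 1) → X) (x : X) :
    ∑ j, g (x + y j) ≤ (n + 1) * avgSup g y := by
  have hbdd : BddAbove (Set.range fun x => (∑ j, g (x + y j)) / (n + 1)) :=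
    ⟨C, Set.forall_mem_range.2 fun x => (div_le_iff₀' (by positivity)).2
      (sum_comp_add_le_mul y (fun x => (le_abs_self _).trans (hg x)) x)⟩
  exact (div_le_iff₀' (by positivity)).1 (le_ciSup hbdd x)

theorem neg_le_avgSup (hg : ∀ x, |g x| ≤ C) {n : ℕ} (y : Fin (n + 1) → X) : -C ≤ avgSup g y := by
  have h := (sum_le_sum fun j (_ : j ∈ univ) => neg_le_of_abs_le (hg (0 + y j))).trans
    (sum_le_mul_avgSup hg y 0)
  simp only [sum_const, card_univ, Fintype.card_fin, nsmul_eq_mul] at h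
  push_cast at h
  nlinarith

theorem bddBelow_range_avgSup (hg : ∀ x, |g x| ≤ C) :
    BddBelow (Set.range fun q : Σ n : ℕ, Fin (n + 1) → X => avgSup g q.2) :=
  ⟨-C, Set.forall_mem_range.2 fun q => neg_le_avgSup hg q.2⟩

theorem dixmierMean_le_avgSup (hg : ∀ x, |g x| ≤ C) {n : ℕ} (y : Fin (n + 1) → X) :
    dixmierMean g ≤ avgSup g y :=
  ciInf_le (bddBelow_range_avgSup hg) ⟨n, y⟩

theorem dixmierMean_le_of_le (hg : ∀ x, |g x| ≤ C) {c : ℝ} (hc : ∀ x, g x ≤ c) :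
    dixmierMean g ≤ c :=
  (dixmierMean_le_avgSup hg (fun _ : Fin 1 => 0)).trans (avgSup_le _ hc)

theorem exists_avgSup_add_le (hg : ∀ x, |g x| ≤ C) {D : ℝ} (hh : ∀ x, |h x| ≤ D) {n m : ℕ}
    (y : Fin (n + 1) → X) (z : Fin (m + 1) → X) :
    ∃ (K : ℕ) (w : Fin (K + 1) → X), avgSup (g + h) w ≤ avgSup g y + avgSup h z := by
  -- average over all the sums `y a + z b`
  have hK : (n + 1) * (m + 1) = (n * m + n + m) + 1 := by ring
  let e := finProdFinEquiv.trans (finCongr hK)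
  refine ⟨_, fun j => y (e.symm j).1 + z (e.symm j).2, ciSup_le fun x => ?_⟩
  rw [div_le_iff₀' (by positivity), Equiv.sum_comp e.symm (fun q => (g + h) (x + (y q.1 + z q.2))),
    Fintype.sum_prod_type]
  simp only [Pi.add_apply, sum_add_distrib]
  have hg' : ∑ a, ∑ b, g (x + (y a + z b)) ≤ (m + 1) * ((n + 1) * avgSup g y) :=
    calc ∑ a, ∑ b, g (x + (y a + z b)) = ∑ b, ∑ a, g (x + z b + y a) :=
          sum_comm.trans (sum_congr rfl fun b _ =>
            sum_congr rfl fun a _ => congrArg g (by abel))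
      _ ≤ ∑ b : Fin (m + 1), (n + 1) * avgSup g y :=
          sum_le_sum fun b _ => sum_le_mul_avgSup hg y (x + z b)
      _ = (m + 1) * ((n + 1) * avgSup g y) := by simp
  have hh' : ∑ a, ∑ b, h (x + (y a + z b)) ≤ (n + 1) * ((m + 1) * avgSup h z) :=
    calc ∑ a, ∑ b, h (x + (y a + z b)) = ∑ a, ∑ b, h (x + y a + z b) := by simp only [add_assoc]
      _ ≤ ∑ a : Fin (n + 1), (m + 1) * avgSup h z :=
          sum_le_sum fun a _ => sum_le_mul_avgSup hh z (x + y a)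
      _ = (n + 1) * ((m + 1) * avgSup h z) := by simp
  push_cast
  nlinarith

theorem dixmierMean_add_le (hg : ∀ x, |g x| ≤ C) {D : ℝ} (hh : ∀ x, |h x| ≤ D) :
    dixmierMean (g + h) ≤ dixmierMean g + dixmierMean h := by
  have hgh : ∀ x, |(g + h) x| ≤ C + D := fun x => (abs_add_le _ _).trans (add_le_add (hg x) (hh x))
  refine le_ciInf_add_ciInf fun q r => ?_
  obtain ⟨K, w, hw⟩ := exists_avgSup_add_le hg hh q.2 r.2
  exact (dixmierMean_le_avgSup hgh w).trans hw

theorem dixmierMean_smul {c : ℝ} (hc : 0 ≤ c) (g : X → ℝ) :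
    dixmierMean (c • g) = c * dixmierMean g := by
  simp only [dixmierMean, avgSup, Real.mul_iInf_of_nonneg hc, Real.mul_iSup_of_nonneg hc,
    Pi.smul_apply, smul_eq_mul, ← mul_sum, mul_div_assoc]

theorem dixmierMean_zero : dixmierMean (0 : X → ℝ) = 0 := by
  simp [dixmierMean, avgSup]

theorem dixmierMean_sub_translate_le (hg : ∀ x, |g x| ≤ C) (t : X) :
    dixmierMean (fun x => g (x + t) - g x) ≤ 0 := by
  have hlim := tendsto_one_div_add_atTop_nhds_zero_nat.const_mul (2 * C)
  rw [mul_zero] at hlim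
  refine ge_of_tendsto' hlim fun n => (dixmierMean_le_avgSup (C := 2 * C) (fun x => ?_)
      fun j : Fin (n + 1) => (j : ℕ) • t).trans (ciSup_le fun x => ?_)
  · exact (abs_sub _ _).trans (by linarith [hg (x + t), hg x])
  -- the sum over the translates `x + j • t` telescopes
  have htel : ∑ j : Fin (n + 1), (g (x + (j : ℕ) • t + t) - g (x + (j : ℕ) • t)) =
      g (x + (n + 1) • t) - g x := by
    simp_rw [add_assoc, ← succ_nsmul]
    rw [Fin.sum_univ_eq_sum_range (fun j => g (x + (j + 1) • t) - g (x + j • t)),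
      sum_range_sub (fun j => g (x + j • t))]
    simp
  rw [htel, mul_one_div, div_le_div_iff_of_pos_right (by positivity)]
  linarith [abs_le.1 (hg (x + (n + 1) • t)), abs_le.1 (hg x)]

theorem exists_invariant_mean :
    ∃ M : boundedFunctions X →ₗ[ℝ] ℝ,
      (∀ (g : boundedFunctions X) (c : ℝ), (∀ x, (g : X → ℝ) x ≤ c) → M g ≤ c) ∧
      ∀ (g : X → ℝ) (hg : g ∈ boundedFunctions X) (t : X),
        M ⟨fun x => g (x + t), comp_add_right_mem_boundedFunctions hg t⟩ = M ⟨g, hg⟩ := by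
  obtain ⟨M, -, hM⟩ := exists_extension_of_le_sublinear ⟨⊥, 0⟩
    (fun g : boundedFunctions X => dixmierMean (g : X → ℝ))
    (fun c hc g => by rw [Submodule.coe_smul, dixmierMean_smul hc.le])
    (fun g h => by
      obtain ⟨C, hg⟩ := g.2
      obtain ⟨D, hh⟩ := h.2
      exact dixmierMean_add_le hg hh)
    (fun g => by simp [(Submodule.mem_bot ℝ).1 g.2, dixmierMean_zero])
  refine ⟨M, fun g c hc => (hM g).trans ?_, fun g hg t => ?_⟩
  · obtain ⟨C, hg⟩ := g.2
    exact dixmierMean_le_of_le hg hc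
  obtain ⟨C, hC⟩ := id hg
  set G : boundedFunctions X := ⟨g, hg⟩
  set G' : boundedFunctions X := ⟨_, comp_add_right_mem_boundedFunctions hg t⟩
  have h₁ : M (G' - G) ≤ 0 := (hM _).trans (dixmierMean_sub_translate_le hC t)
  have hG : ((G - G' : boundedFunctions X) : X → ℝ) = fun x => (-g) (x + t) - (-g) x := by
    funext x
    simp [G, G', sub_eq_neg_add, add_comm]
  have h₂ : M (G - G') ≤ 0 := (hM _).trans (by
    rw [hG]
    exact dixmierMean_sub_translate_le (g := -g) (by simpa using hC) t)
  rw [map_sub] at h₁ h₂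
  linarith

end InvariantMean

section Sandwich

variable {X : Type*} [AddCommGroup X]

theorem exists_addMonoidHom_le {P : X → ℝ} (hP : ∀ x y, P (x + y) ≤ P x + P y) :
    ∃ b : X →+ ℝ, ∀ x, b x ≤ P x := by
  obtain ⟨M, hM, hinv⟩ := exists_invariant_mean (X := X)
  -- `b x` is the mean of the increments `z ↦ P (x + z) - P z`, which lie in `[-P (-x), P x]`
  have hW : ∀ x, (fun z => P (x + z) - P z) ∈ boundedFunctions X := fun x =>
    ⟨|P x| + |P (-x)|, fun z => by
      show |P (x + z) - P z| ≤ _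
      have := hP (x + z) (-x)
      rw [add_neg_cancel_comm] at this
      exact abs_le.2 ⟨by linarith [le_abs_self (P (-x)), abs_nonneg (P x)],
        by linarith [le_abs_self (P x), abs_nonneg (P (-x)), hP x z]⟩⟩
  refine ⟨AddMonoidHom.mk' (fun x => M ⟨_, hW x⟩) fun x x' => ?_,
    fun x => hM _ _ fun z => by linarith [hP x z]⟩
  have hsplit : (⟨_, hW (x + x')⟩ : boundedFunctions X) =
      ⟨fun z => P (x + (z + x')) - P (z + x'), comp_add_right_mem_boundedFunctions (hW x) x'⟩ +
        ⟨_, hW x'⟩ := by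
    ext z
    simp only [Submodule.coe_add, Pi.add_apply]
    rw [add_comm z x', ← add_assoc]
    ring
  show M ⟨_, hW (x + x')⟩ = M ⟨_, hW x⟩ + M ⟨_, hW x'⟩
  rw [hsplit, map_add, hinv _ (hW x) x']

theorem exists_addMonoidHom_between {P Q : X → ℝ} (hP : ∀ x y, P (x + y) ≤ P x + P y)
    (hQ : ∀ x y, Q x + Q y ≤ Q (x + y)) (hQP : ∀ x, Q x ≤ P x) (hP0 : P 0 = 0) (hQ0 : Q 0 = 0) :
    ∃ b : X →+ ℝ, ∀ x, Q x ≤ b x ∧ b x ≤ P x := by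
  -- an additive minorant of the inf-convolution `R x = ⨅ y, P (x + y) - Q y`
  have hbdd : ∀ x, BddBelow (Set.range fun y => P (x + y) - Q y) := fun x =>
    ⟨Q x, Set.forall_mem_range.2 fun y => by linarith [hQ x y, hQP (x + y)]⟩
  have hR : ∀ x x', ⨅ y, (P (x + x' + y) - Q y) ≤
      (⨅ y, (P (x + y) - Q y)) + ⨅ y, (P (x' + y) - Q y) := fun x x' =>
    le_ciInf_add_ciInf fun y y' => (ciInf_le (hbdd _) (y + y')).trans (by
      have := hP (x + y) (x' + y')
      rw [show x + y + (x' + y') = x + x' + (y + y') by abel] at this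
      linarith [hQ y y'])
  obtain ⟨b, hb⟩ := exists_addMonoidHom_le (P := fun x => ⨅ y, (P (x + y) - Q y)) hR
  refine ⟨b, fun x => ⟨?_, (hb x).trans ((ciInf_le (hbdd x) 0).trans (by simp [hQ0]))⟩⟩
  have := (hb (-x)).trans (ciInf_le (hbdd (-x)) x)
  rw [neg_add_cancel, hP0, map_neg] at this
  linarith

theorem exists_addMonoidHom_le_of_le_smul_add {D S : X → ℝ} {lam : ℝ} (hlam : 0 ≤ lam)
    (hD : ∀ x y, D (x + y) ≤ D x + D y) (hD0 : D 0 = 0) (hS : ∀ x y, S (x + y) ≤ S x + S y)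
    (hS0 : S 0 = 0) (c : X →+ ℝ) (hc : ∀ x, c x ≤ lam * D x + S x) :
    ∃ b : X →+ ℝ, (∀ x, b x ≤ D x) ∧ ∀ x, c x - lam * b x ≤ S x := by
  rcases hlam.eq_or_lt with rfl | hpos
  · obtain ⟨b, hb⟩ := exists_addMonoidHom_le hD
    exact ⟨b, hb, fun x => by simpa using hc x⟩
  · obtain ⟨b, hb⟩ := exists_addMonoidHom_between (Q := fun x => (c x - S x) / lam) hD
      (fun x y => by
        rw [← add_div, div_le_div_iff_of_pos_right hpos, map_add]
        linarith [hS x y])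
      (fun x => by rw [div_le_iff₀' hpos]; linarith [hc x]) hD0 (by simp [hS0])
    exact ⟨b, fun x => (hb x).2, fun x => by
      have := (hb x).1
      rw [div_le_iff₀' hpos] at this
      linarith⟩

theorem exists_addMonoidHom_sum_smul_eq {ι : Type*} [DecidableEq ι] (t : Finset ι)
    {lam : ι → ℝ} (hlam : ∀ i, 0 ≤ lam i) {D : ι → X → ℝ}
    (hD : ∀ i x y, D i (x + y) ≤ D i x + D i y) (hD0 : ∀ i, D i 0 = 0) (c : X →+ ℝ)
    (hc : ∀ x, c x ≤ ∑ i ∈ t, lam i * D i x) :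
    ∃ b : ι → X →+ ℝ, (∀ i ∈ t, ∀ x, b i x ≤ D i x) ∧ ∀ x, ∑ i ∈ t, lam i * b i x = c x := by
  induction t using Finset.induction_on generalizing c with
  | empty =>
    refine ⟨0, by simp, fun x => ?_⟩
    have h₁ := hc x
    have h₂ := hc (-x)
    simp only [sum_empty, map_neg] at h₁ h₂ ⊢
    linarith
  | insert a t ha ih =>
    obtain ⟨ba, hba, hcba⟩ := exists_addMonoidHom_le_of_le_smul_add (hlam a) (hD a) (hD0 a)
      (S := fun x => ∑ i ∈ t, lam i * D i x)
      (fun x y => by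
        simp only [← sum_add_distrib, ← mul_add]
        exact sum_le_sum fun i _ => mul_le_mul_of_nonneg_left (hD i x y) (hlam i))
      (by simp [hD0]) c (fun x => by simpa [sum_insert ha] using hc x)
    obtain ⟨b, hb, hsum⟩ := ih (c - lam a • ba) fun x => by simpa using hcba x
    refine ⟨Function.update b a ba, fun i hi => ?_, fun x => ?_⟩
    · rcases mem_insert.1 hi with rfl | hi
      · simpa using hba
      · simpa [Function.update_of_ne (ne_of_mem_of_not_mem hi ha)] using hb i hi
    · rw [sum_insert ha, Function.update_self,
        sum_congr rfl fun i hi => by rw [Function.update_of_ne (ne_of_mem_of_not_mem hi ha)],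
        hsum]
      simp

end Sandwich

theorem Fintype.sum_dite_eq_sum_subtype {ι M : Type*} [Fintype ι] [AddCommMonoid M] (P : ι → Prop)
    [DecidablePred P] (f : {i // P i} → M) :
    ∑ i, (if h : P i then f ⟨i, h⟩ else 0) = ∑ j, f j := by
  rw [← Fintype.sum_subtype_add_sum_subtype P,
    Finset.sum_eq_zero fun (i : {i // ¬P i}) _ => dif_neg i.2, add_zero]
  exact Finset.sum_congr rfl fun j _ => dif_pos j.2

section Multipliers

variable {X : Type*} [AddCommGroup X]

theorem exists_mem_stdSimplex_of_subadditive {ι : Type*} [Fintype ι] {D : ι → X → ℝ}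
    (hD : ∀ i x y, D i (x + y) ≤ D i x + D i y) (hD0 : ∀ i, D i 0 = 0)
    (hmax : ∀ h, ∃ i, 0 ≤ D i h) :
    ∃ lam ∈ stdSimplex ℝ ι, ∀ h, 0 ≤ ∑ i, lam i * D i h := by
  let S : AddSubmonoid (ι → ℝ) :=
    { carrier := {v | ∃ h, ∀ i, D i h ≤ v i}
      add_mem' := fun ⟨h, hh⟩ ⟨h', hh'⟩ =>
        ⟨h + h', fun i => (hD i h h').trans (add_le_add (hh i) (hh' i))⟩
      zero_mem' := ⟨0, fun i => (hD0 i).le⟩ }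
  obtain ⟨lam, hlam, hS⟩ := exists_mem_stdSimplex_sum_mul_nonneg
    (convex_convexHull ℝ (S : Set (ι → ℝ))) ⟨0, subset_convexHull ℝ _ S.zero_mem⟩
    fun v hv => S.exists_nonneg_of_mem_convexHull (fun v ⟨h, hh⟩ =>
      let ⟨i, hi⟩ := hmax h
      ⟨i, hi.trans (hh i)⟩) hv
  exact ⟨lam, hlam, fun h => hS _ (subset_convexHull ℝ _ ⟨h, fun i => le_rfl⟩)⟩

theorem exists_lagrange_multipliers {ι : Type*} [Fintype ι] {p : ℕ} (hp : 2 ≤ p)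
    (hdiv : Function.Surjective fun x : X => p • x) {F : ι → X → ℝ} (hF : ∀ i, RConvexFn (F i))
    (hF0 : ∀ i, F i 0 ≤ 0) (hmax : ∀ h, ∃ i, 0 ≤ F i h) :
    ∃ lam ∈ stdSimplex ℝ ι, ∃ b : ι → X →+ ℝ, (∀ i, F i 0 ≠ 0 → lam i = 0) ∧
      (∀ i, F i 0 = 0 → ∀ h, b i h ≤ F i h) ∧ ∀ h, ∑ i, lam i * b i h = 0 := by
  classical
  have hs : ∀ x, p • Function.surjInv hdiv x = x := Function.surjInv_eq hdiv
  let D : {i // F i 0 = 0} → X → ℝ := fun i => dirDeriv p (Function.surjInv hdiv) (F i)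
  have hD : ∀ i x y, D i (x + y) ≤ D i x + D i y := fun i => dirDeriv_add_le (hF i) i.2 hp hs
  have hD0 : ∀ i, D i 0 = 0 := fun i => dirDeriv_zero (hF i) i.2 hs
  obtain ⟨lam, ⟨hlam0, hlam1⟩, hlamD⟩ := exists_mem_stdSimplex_of_subadditive hD hD0 fun h =>
    let ⟨i, hi0, hi⟩ := exists_dirDeriv_nonneg hF hF0 (by omega) hs hmax h
    ⟨⟨i, hi0⟩, hi⟩
  obtain ⟨b, hbD, hb⟩ := exists_addMonoidHom_sum_smul_eq univ hlam0 hD hD0 0 fun h => by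
    simpa using hlamD h
  refine ⟨fun i => if h : F i 0 = 0 then lam ⟨i, h⟩ else 0, ⟨fun i => ?_, ?_⟩,
    fun i => if h : F i 0 = 0 then b ⟨i, h⟩ else 0, fun i hi => dif_neg hi,
    fun i hi h => ?_, fun h => ?_⟩
  · dsimp only
    split_ifs
    exacts [hlam0 _, le_rfl]
  · rw [Fintype.sum_dite_eq_sum_subtype, hlam1]
  · dsimp only
    rw [dif_pos hi]
    exact (hbD _ (mem_univ _) h).trans (dirDeriv_le_self (hF i) hi hs h)
  · have hbh := hb h
    rw [← Fintype.sum_dite_eq_sum_subtype (fun i => F i 0 = 0) fun j => lam j * b j h] at hbh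
    refine (sum_congr rfl fun i _ => ?_).trans hbh
    by_cases hi : F i 0 = 0 <;> simp [hi]

end Multipliers

theorem mem_subdiff_sup'_of_eq_sum {X ι : Type*} [AddCommGroup X] [Fintype ι]
    (H : (univ : Finset ι).Nonempty) {f : ι → X → ℝ} {x₀ : X} {φ : X → ℝ}
    (hφ : ∀ x y, φ (x + y) = φ x + φ y) {lam : ι → ℝ} {a : ι → X → ℝ} (hlam0 : ∀ i, 0 ≤ lam i)
    (hlam1 : ∑ i, lam i = 1) (hinact : ∀ i, f i x₀ ≠ univ.sup' H (fun j => f j x₀) → lam i = 0)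
    (ha : ∀ i, f i x₀ = univ.sup' H (fun j => f j x₀) → a i ∈ subdiff (f i) x₀)
    (hrep : ∀ x, φ x = ∑ i, lam i * a i x) :
    φ ∈ subdiff (fun x => univ.sup' H fun i => f i x) x₀ := by
  refine ⟨hφ, fun h => ?_⟩
  set M := univ.sup' H fun j => f j x₀
  have hterm : ∀ i, lam i * (M + a i h) ≤ lam i * univ.sup' H (fun j => f j (x₀ + h)) :=
    fun i => by
      by_cases hi : f i x₀ = M
      · refine mul_le_mul_of_nonneg_left ?_ (hlam0 i)
        linarith [(ha i hi).2 h, le_sup' (fun j => f j (x₀ + h)) (mem_univ i)]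
      · simp [hinact i hi]
  calc M + φ h = ∑ i, lam i * (M + a i h) := by
        simp only [mul_add, sum_add_distrib, ← sum_mul, hlam1, one_mul, hrep h]
    _ ≤ ∑ i, lam i * univ.sup' H (fun j => f j (x₀ + h)) := sum_le_sum fun i _ => hterm i
    _ = univ.sup' H (fun j => f j (x₀ + h)) := by rw [← sum_mul, hlam1, one_mul]

/-- Subdifferential of a maximum via Lagrange multipliers: for convex `f₁, …, f_k` on a
semidivisible group and `f = max fᵢ`, an additive `φ` lies in `∂f(x₀)` iff it is a convex
combination `φ = Σ λᵢ aᵢ` with nonnegative weights `λᵢ` summing to `1`, vanishing off the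
active index set `I(x₀) = {i : fᵢ(x₀) = f(x₀)}`, and `aᵢ ∈ ∂fᵢ(x₀)` for active `i`. -/
theorem subdiff_max {X : Type*} [AddCommGroup X]
    (hdiv : ∃ p : ℕ, p.Prime ∧ Function.Surjective fun x : X => p • x)
    (k : ℕ) (hk : 0 < k) (f : Fin k → X → ℝ) (hf : ∀ i, RConvexFn (f i)) (x₀ : X)
    (φ : X → ℝ) (hφ : ∀ x y, φ (x + y) = φ x + φ y) :
    φ ∈ subdiff (fun x =>
        Finset.univ.sup' (Finset.univ_nonempty_iff.mpr ⟨⟨0, hk⟩⟩) fun i => f i x) x₀ ↔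
      ∃ (lam : Fin k → ℝ) (a : Fin k → X → ℝ),
        (∀ i, 0 ≤ lam i) ∧ (∑ i, lam i = 1) ∧
        (∀ i, f i x₀ ≠
            (Finset.univ.sup' (Finset.univ_nonempty_iff.mpr ⟨⟨0, hk⟩⟩) fun j => f j x₀) →
          lam i = 0) ∧
        (∀ i, f i x₀ =
            (Finset.univ.sup' (Finset.univ_nonempty_iff.mpr ⟨⟨0, hk⟩⟩) fun j => f j x₀) →
          a i ∈ subdiff (f i) x₀) ∧
        ∀ x, φ x = ∑ i, lam i * a i x := by
  set H : (univ : Finset (Fin k)).Nonempty := univ_nonempty_iff.mpr ⟨⟨0, hk⟩⟩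
  set M := univ.sup' H fun j => f j x₀
  refine ⟨fun hmem => ?_, fun ⟨lam, a, hlam0, hlam1, hinact, ha, hrep⟩ =>
    mem_subdiff_sup'_of_eq_sum H hφ hlam0 hlam1 hinact ha hrep⟩
  obtain ⟨p, hp, hsurj⟩ := hdiv
  let ψ := AddMonoidHom.mk' φ hφ
  obtain ⟨lam, ⟨hlam0, hlam1⟩, b, hinact, hb, hsum⟩ := exists_lagrange_multipliers hp.two_le hsurj
    (F := fun i h => f i (x₀ + h) - M - ψ h)
    (fun i => ((hf i).comp_add_left x₀).sub_addMonoidHom ψ M)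
    (fun i => by simpa using le_sup' (fun j => f j x₀) (mem_univ i))
    (fun h => by
      obtain ⟨i, -, hi⟩ := exists_mem_eq_sup' H fun j => f j (x₀ + h)
      have := hmem.2 h
      simp only [hi] at this
      exact ⟨i, by simp only [ψ, AddMonoidHom.mk'_apply]; linarith⟩)
  refine ⟨lam, fun i x => φ x + b i x, hlam0, hlam1, fun i hi => hinact i (by simpa [sub_eq_zero]),
    fun i hi => ⟨fun x y => by simp only [hφ, map_add]; ring, fun h => ?_⟩, fun x => ?_⟩
  · have := hb i (by simp [hi]) h
    simp only [ψ, AddMonoidHom.mk'_apply] at this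
    linarith
  · simp only [mul_add, sum_add_distrib, ← sum_mul, hlam1, one_mul, hsum x, add_zero]
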